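/- Let A ⊆ ℝⁿ be a nonempty closed set and y ∈ ∂A. If the convex hull co N_A(y) of the limiting normal cone to A at y is pointed, then the Clarke tangent cone to A at y has nonempty interior: int T_A(y) ≠ ∅. -/

import Mathlib

open Set MeasureTheory Filter Topology Metric
open scoped RealInnerProductSpace

noncomputable section

variable {H : Type*} [NormedAddCommGroup H] [InnerProductSpace ℝ H]

/-- The Clarke tangent cone to `A` at `x`. -/
def clarkeTangentCone (A : Set H) (x : H) : Set H :=
  {ξ | ∀ (xs : ℕ → H) (ts : ℕ → ℝ), (∀ i, xs i ∈ A) → Tendsto xs atTop (𝓝 x) →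
      (∀ i, 0 < ts i) → Tendsto ts atTop (𝓝 0) →
      ∃ as : ℕ → H, (∀ i, as i ∈ A) ∧
        Tendsto (fun i => (ts i)⁻¹ • (as i - xs i)) atTop (𝓝 ξ)}

/-- The proximal normal cone to `A` at `x`. -/
def proxNormalCone (A : Set H) (x : H) : Set H :=
  {η | ∃ M > 0, ∀ y ∈ A, ⟪η, y - x⟫ ≤ M * ‖y - x‖ ^ 2}

/-- The limiting normal cone to `A` at `x`. -/
def limitingNormalCone (A : Set H) (x : H) : Set H :=
  {η | ∃ xs ηs : ℕ → H, (∀ i, xs i ∈ A) ∧ (∀ i, ηs i ∈ proxNormalCone A (xs i)) ∧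
    Tendsto xs atTop (𝓝 x) ∧ Tendsto ηs atTop (𝓝 η)}

/-- A set `K` is a pointed cone if `d₁ + d₂ ≠ 0` for every two nonzero elements of `K`. -/
def IsPointedCone (K : Set H) : Prop :=
  ∀ d₁ ∈ K, ∀ d₂ ∈ K, d₁ ≠ 0 → d₂ ≠ 0 → d₁ + d₂ ≠ 0

/-!
Pointedness keeps `0` out of the convex hull of the unit limiting normals, which is compact by
Carathéodory; separating gives `v` and `ε > 0` with `⟪η, v⟫ ≤ -ε ‖η‖` on `N_A(y)`. By compactness
of the unit sphere, proximal normals at points of `A` near `y` satisfy the same inequality with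
`ε / 2`. For `w` close to `v`, the squared distance to `A` along `t ↦ x + t • w` then has negative
right Dini derivative wherever it is positive, so it stays `0`: `x + t • w ∈ A` for all `x ∈ A`
near `y` and small `t > 0`, which puts a ball around `v` inside `T_A(y)`.
-/

section Cones

lemma limitingNormalCone_eq_preimage_closure (A : Set H) (x : H) :
    limitingNormalCone A x =
      (fun η => (x, η)) ⁻¹' closure {p : H × H | p.1 ∈ A ∧ p.2 ∈ proxNormalCone A p.1} := by
  ext η
  simp only [mem_preimage, mem_closure_iff_seq_limit]
  constructor
  · rintro ⟨xs, ηs, hxs, hηs, hx, hη⟩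
    exact ⟨fun i => (xs i, ηs i), fun i => ⟨hxs i, hηs i⟩, hx.prodMk_nhds hη⟩
  · rintro ⟨p, hp, hlim⟩
    exact ⟨fun i => (p i).1, fun i => (p i).2, fun i => (hp i).1, fun i => (hp i).2,
      (continuous_fst.tendsto _).comp hlim, (continuous_snd.tendsto _).comp hlim⟩

lemma isClosed_limitingNormalCone (A : Set H) (x : H) : IsClosed (limitingNormalCone A x) := by
  rw [limitingNormalCone_eq_preimage_closure]
  exact isClosed_closure.preimage (continuous_const.prodMk continuous_id)

variable {A : Set H} {x η : H} {c : ℝ}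

lemma smul_mem_proxNormalCone (hc : 0 < c) (h : η ∈ proxNormalCone A x) :
    c • η ∈ proxNormalCone A x := by
  obtain ⟨M, hM, h⟩ := h
  refine ⟨c * M, by positivity, fun y hy => ?_⟩
  rw [real_inner_smul_left, mul_assoc]
  exact mul_le_mul_of_nonneg_left (h y hy) hc.le

lemma smul_mem_limitingNormalCone (hc : 0 < c) (h : η ∈ limitingNormalCone A x) :
    c • η ∈ limitingNormalCone A x := by
  obtain ⟨xs, ηs, hxs, hηs, hx, hη⟩ := h
  exact ⟨xs, fun i => c • ηs i, hxs, fun i => smul_mem_proxNormalCone hc (hηs i), hx,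
    hη.const_smul c⟩

lemma sub_mem_proxNormalCone_of_infDist_eq_dist {p q : H} (hq : infDist q A = dist q p) :
    q - p ∈ proxNormalCone A p := by
  refine ⟨1, one_pos, fun a ha => ?_⟩
  have hle : ‖q - p‖ ≤ ‖q - a‖ := by
    simpa only [dist_eq_norm, hq] using infDist_le_dist_of_mem (x := q) ha
  have hexp : ‖q - a‖ ^ 2 = ‖q - p‖ ^ 2 - 2 * ⟪q - p, a - p⟫ + ‖a - p‖ ^ 2 := by
    rw [show q - a = (q - p) - (a - p) by abel, norm_sub_sq_real]
  nlinarith [norm_nonneg (q - p), norm_nonneg (a - p)]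

end Cones

section Separation

lemma isCompact_convexHull {E : Type*} [NormedAddCommGroup E] [NormedSpace ℝ E]
    [FiniteDimensional ℝ E] {s : Set E} (hs : IsCompact s) : IsCompact (convexHull ℝ s) := by
  classical
  let φ : (k : ℕ) → (Fin k → ℝ) × (Fin k → E) → E := fun k p => ∑ i, p.1 i • p.2 i
  -- Carathéodory: at most `finrank ℝ E + 1` points are needed.
  have hcar : convexHull ℝ s = ⋃ k ∈ Finset.range (Module.finrank ℝ E + 2),
      φ k '' (stdSimplex ℝ (Fin k) ×ˢ univ.pi fun _ => s) := by
    refine Subset.antisymm (fun x hx => ?_) (iUnion₂_subset fun k _ => ?_)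
    · obtain ⟨ι, _, z, w, hzs, hz, hw0, hw1, rfl⟩ := eq_pos_convex_span_of_mem_convexHull hx
      have hcard : Fintype.card ι < Module.finrank ℝ E + 2 := by
        have := Submodule.finrank_le (vectorSpan ℝ (range z))
        have := hz.card_le_finrank_succ
        omega
      let e := Fintype.equivFin ι
      refine mem_iUnion₂.2 ⟨_, Finset.mem_range.2 hcard, (w ∘ e.symm, z ∘ e.symm),
        ⟨⟨fun j => (hw0 _).le, ?_⟩, fun j _ => hzs (mem_range_self _)⟩, ?_⟩
      · rw [← hw1]
        exact e.symm.sum_comp w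
      · exact e.symm.sum_comp fun i => w i • z i
    · rintro _ ⟨⟨w, z⟩, ⟨⟨hw0, hw1⟩, hz⟩, rfl⟩
      exact (convex_convexHull ℝ s).sum_mem (fun i _ => hw0 i) hw1
        fun i _ => subset_convexHull ℝ s (hz i (mem_univ i))
  rw [hcar]
  exact (Finset.range _).isCompact_biUnion fun k _ =>
    ((isCompact_stdSimplex ℝ _).prod (isCompact_univ_pi fun _ => hs)).image (by fun_prop)

variable {N : Set H} (hN : ∀ c : ℝ, 0 < c → ∀ η ∈ N, c • η ∈ N)
include hN

open scoped Pointwise in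
lemma smul_mem_convexHull_of_forall_smul_mem {c : ℝ} (hc : 0 < c) {η : H}
    (hη : η ∈ convexHull ℝ N) : c • η ∈ convexHull ℝ N := by
  have hsub : c • convexHull ℝ N ⊆ convexHull ℝ N := by
    rw [← convexHull_smul]
    exact convexHull_mono (smul_set_subset_iff.2 fun η hη => hN c hc η hη)
  exact hsub (smul_mem_smul_set hη)

lemma zero_notMem_convexHull_diff_zero (hp : IsPointedCone (convexHull ℝ N)) :
    (0 : H) ∉ convexHull ℝ (N \ {0}) := by
  classical
  intro h0
  obtain ⟨ι, _, z, w, hzN, -, hw0, hw1, hsum⟩ := eq_pos_convex_span_of_mem_convexHull h0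
  have hz : ∀ i, z i ∈ N ∧ z i ≠ 0 := fun i => hzN (mem_range_self i)
  obtain ⟨j⟩ : Nonempty ι := by
    by_contra hι
    simp [not_nonempty_iff.1 hι] at hw1
  set t := Finset.univ.erase j
  have hsplit : w j • z j + ∑ i ∈ t, w i • z i = 0 :=
    (Finset.add_sum_erase _ _ (Finset.mem_univ j)).trans hsum
  have hd₁ : w j • z j ≠ 0 := smul_ne_zero (hw0 j).ne' (hz j).2
  have hd₂ : ∑ i ∈ t, w i • z i ≠ 0 := fun h => hd₁ (by rwa [h, add_zero] at hsplit)
  have ht : 0 < ∑ i ∈ t, w i :=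
    Finset.sum_pos (fun i _ => hw0 i) (Finset.nonempty_of_sum_ne_zero hd₂)
  have hmem : ∑ i ∈ t, w i • z i ∈ convexHull ℝ N := by
    have := smul_mem_convexHull_of_forall_smul_mem hN ht
      (t.centerMass_mem_convexHull (fun i _ => (hw0 i).le) ht fun i _ => (hz i).1)
    rwa [Finset.centerMass, smul_inv_smul₀ ht.ne'] at this
  exact hp _ (subset_convexHull ℝ N (hN _ (hw0 j) _ (hz j).1)) _ hmem hd₁ hd₂ hsplit

lemma exists_inner_le_neg_mul_norm_of_isPointedCone [FiniteDimensional ℝ H] (hNc : IsClosed N)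
    (hp : IsPointedCone (convexHull ℝ N)) : ∃ v : H, ∃ ε > 0, ∀ η ∈ N, ⟪η, v⟫ ≤ -(ε * ‖η‖) := by
  set S := N ∩ sphere (0 : H) 1
  have hS : IsCompact (convexHull ℝ S) :=
    isCompact_convexHull ((isCompact_sphere 0 1).inter_left hNc)
  have hS0 : S ⊆ N \ {0} := fun η hη => ⟨hη.1, ne_of_mem_sphere hη.2 one_ne_zero⟩
  have h0 : (0 : H) ∉ convexHull ℝ S := fun h =>
    zero_notMem_convexHull_diff_zero hN hp (convexHull_mono hS0 h)
  obtain ⟨f, u, hfu, hu⟩ :=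
    geometric_hahn_banach_closed_point (convex_convexHull ℝ S) hS.isClosed h0
  refine ⟨(InnerProductSpace.toDual ℝ H).symm f, -u, by simpa using hu, fun η hη => ?_⟩
  rw [real_inner_comm, InnerProductSpace.toDual_symm_apply]
  rcases eq_or_ne η 0 with rfl | hη0
  · simp
  have hpos : 0 < ‖η‖ := norm_pos_iff.2 hη0
  have hunit : ‖η‖⁻¹ • η ∈ S :=
    mem_inter (hN _ (inv_pos.2 hpos) η hη) (by simp [norm_smul, hpos.ne'])
  have := hfu _ (subset_convexHull ℝ S hunit)
  rw [map_smul, smul_eq_mul, inv_mul_lt_iff₀ hpos] at this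
  linarith

end Separation

section Flow

lemma frequently_slope_lt_of_le_of_hasDerivAt {f g : ℝ → ℝ} {s g' r : ℝ}
    (hfg : ∀ᶠ z in 𝓝[>] s, f z ≤ g z) (hs : f s = g s) (hg : HasDerivAt g g' s) (hr : g' < r) :
    ∃ᶠ z in 𝓝[>] s, slope f s z < r := by
  refine Eventually.frequently ?_
  filter_upwards [hfg, hg.hasDerivWithinAt.limsup_slope_le' (lt_irrefl s) hr,
    self_mem_nhdsWithin] with z hz hslope hsz
  refine lt_of_le_of_lt ?_ hslope
  rw [slope_def_field, slope_def_field, hs]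
  exact div_le_div_of_nonneg_right (by linarith) (sub_nonneg.2 (le_of_lt hsz))

lemma frequently_slope_infDist_sq_lt {A : Set H} {c : ℝ → H} {c' p : H} {s r : ℝ} (hp : p ∈ A)
    (hps : infDist (c s) A = dist (c s) p) (hc : HasDerivAt c c' s) (hr : 2 * ⟪c s - p, c'⟫ < r) :
    ∃ᶠ z in 𝓝[>] s, slope (fun z => infDist (c z) A ^ 2) s z < r := by
  refine frequently_slope_lt_of_le_of_hasDerivAt (g := fun z => ‖c z - p‖ ^ 2)
    (Eventually.of_forall fun z => ?_) ?_ (hc.sub_const p).norm_sq hr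
  · rw [← dist_eq_norm]
    exact pow_le_pow_left₀ infDist_nonneg (infDist_le_dist_of_mem hp) 2
  · simp only [hps, dist_eq_norm]

theorem add_smul_mem_of_inner_proxNormalCone_le [ProperSpace H] {A : Set H} (hA : IsClosed A)
    {x w : H} {ε t : ℝ} (hε : 0 < ε) (hx : x ∈ A) (ht : 0 ≤ t)
    (hprox : ∀ z ∈ A, dist z x ≤ 2 * t * ‖w‖ → ∀ η ∈ proxNormalCone A z, ⟪η, w⟫ ≤ -(ε * ‖η‖)) :
    x + t • w ∈ A := by
  set d : ℝ → ℝ := fun s => infDist (x + s • w) A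
  have hline : ∀ s : ℝ, HasDerivAt (fun s => x + s • w) w s := fun s => by
    simpa using ((hasDerivAt_id s).smul_const w).const_add x
  -- At a nearest point `p`, `x + s • w - p` is a proximal normal, so the right Dini derivative of
  -- `d ^ 2` is at most `2 ⟪x + s • w - p, w⟫ ≤ -2 ε d s`.
  have hslope : ∀ s ∈ Ico 0 t, ∀ r, -(2 * ε * d s) < r →
      ∃ᶠ z in 𝓝[>] s, slope (fun z => d z ^ 2) s z < r := by
    intro s hs r hr
    obtain ⟨p, hpA, hp⟩ := hA.exists_infDist_eq_dist ⟨x, hx⟩ (x + s • w)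
    have hsx : dist (x + s • w) x ≤ t * ‖w‖ := by
      rw [dist_eq_norm, add_sub_cancel_left, norm_smul, Real.norm_of_nonneg hs.1]
      exact mul_le_mul_of_nonneg_right hs.2.le (norm_nonneg w)
    have hpx : dist p x ≤ 2 * t * ‖w‖ := by
      have := infDist_le_dist_of_mem (x := x + s • w) hx
      linarith [dist_triangle p (x + s • w) x, dist_comm p (x + s • w)]
    have hη := hprox p hpA hpx _ (sub_mem_proxNormalCone_of_infDist_eq_dist hp)
    rw [← dist_eq_norm, ← hp] at hη
    exact frequently_slope_infDist_sq_lt hpA hp (hline s) (by linarith)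
  have hle : ∀ θ > 0, d t ^ 2 ≤ θ := fun θ hθ =>
    image_le_of_liminf_slope_right_lt_deriv_boundary (B := fun _ => θ) (B' := fun _ => 0)
      (by fun_prop) hslope (by simp [d, infDist_zero_of_mem hx, hθ.le])
      (fun _ => hasDerivAt_const _ _) (fun s _ hs => by
        have : 0 < d s := by nlinarith [infDist_nonneg (x := x + s • w) (s := A)]
        nlinarith) ⟨ht, le_rfl⟩
  have hdt : d t = 0 := pow_eq_zero_iff two_ne_zero |>.1 <|
    le_antisymm (le_of_forall_pos_le_add fun θ hθ => by simpa using hle θ hθ) (sq_nonneg _)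
  exact (hA.mem_iff_infDist_zero ⟨x, hx⟩).2 hdt

end Flow

section Tangent

variable {A : Set H} {x y v : H}

lemma exists_forall_inner_proxNormalCone_le [ProperSpace H] {ε ε' : ℝ} (hε : ε' < ε)
    (hN : ∀ η ∈ limitingNormalCone A y, ⟪η, v⟫ ≤ -(ε * ‖η‖)) :
    ∃ δ > 0, ∀ x ∈ A, dist x y < δ → ∀ η ∈ proxNormalCone A x, ⟪η, v⟫ ≤ -(ε' * ‖η‖) := by
  by_contra! h
  choose xs hxA hxy η hη hηv using fun k : ℕ => h (1 / (k + 1)) Nat.one_div_pos_of_nat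
  have hη0 : ∀ k, η k ≠ 0 := fun k h0 => by simpa [h0] using hηv k
  set u : ℕ → H := fun k => ‖η k‖⁻¹ • η k
  have hu : ∀ k, u k ∈ sphere (0 : H) 1 := fun k => by simp [u, norm_smul, hη0 k]
  have huv : ∀ k, -ε' < ⟪u k, v⟫ := fun k => by
    have hpos : 0 < ‖η k‖ := norm_pos_iff.2 (hη0 k)
    rw [real_inner_smul_left, lt_inv_mul_iff₀ hpos]
    linarith [hηv k]
  obtain ⟨u₀, hu₀, φ, hφ, hlim⟩ := (isCompact_sphere (0 : H) 1).tendsto_subseq hu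
  have hx : Tendsto xs atTop (𝓝 y) := tendsto_iff_dist_tendsto_zero.2 <|
    squeeze_zero (fun _ => dist_nonneg) (fun k => (hxy k).le)
      tendsto_one_div_add_atTop_nhds_zero_nat
  have hu₀N : u₀ ∈ limitingNormalCone A y :=
    ⟨xs ∘ φ, u ∘ φ, fun _ => hxA _, fun _ => smul_mem_proxNormalCone
      (inv_pos.2 (norm_pos_iff.2 (hη0 _))) (hη _), hx.comp hφ.tendsto_atTop, hlim⟩
  have h₁ : -ε' ≤ ⟪u₀, v⟫ :=
    ge_of_tendsto (hlim.inner tendsto_const_nhds) (Eventually.of_forall fun k => (huv _).le)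
  have h₂ := hN u₀ hu₀N
  rw [mem_sphere_zero_iff_norm.1 hu₀] at h₂
  linarith

lemma mem_clarkeTangentCone_of_eventually_add_smul_mem {w : H}
    (h : ∀ᶠ p in 𝓝 x ×ˢ 𝓝[>] (0 : ℝ), p.1 ∈ A → p.1 + p.2 • w ∈ A) :
    w ∈ clarkeTangentCone A x := by
  classical
  intro xs ts hxs hx hts ht
  have hlim : Tendsto (fun i => (xs i, ts i)) atTop (𝓝 x ×ˢ 𝓝[>] (0 : ℝ)) :=
    hx.prodMk (tendsto_nhdsWithin_iff.2 ⟨ht, Eventually.of_forall hts⟩)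
  refine ⟨fun i => if xs i + ts i • w ∈ A then xs i + ts i • w else xs i,
    fun i => by dsimp only; split_ifs with hi; exacts [hi, hxs i], tendsto_const_nhds.congr' ?_⟩
  filter_upwards [hlim.eventually h] with i hi
  rw [if_pos (hi (hxs i)), add_sub_cancel_left, smul_smul, inv_mul_cancel₀ (hts i).ne',
    one_smul]

lemma ball_subset_clarkeTangentCone [ProperSpace H] (hA : IsClosed A) {ε δ : ℝ} (hδ : 0 < δ)
    (hprox : ∀ x ∈ A, dist x y < δ → ∀ η ∈ proxNormalCone A x, ⟪η, v⟫ ≤ -(ε * ‖η‖)) :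
    ball v ε ⊆ clarkeTangentCone A y := by
  intro w hw
  have hnear : ∀ᶠ p in 𝓝 y ×ˢ 𝓝[>] (0 : ℝ), dist p.1 y + 2 * p.2 * ‖w‖ < δ ∧ 0 < p.2 := by
    have hcont : Tendsto (fun p : H × ℝ => dist p.1 y + 2 * p.2 * ‖w‖) (𝓝 (y, 0)) (𝓝 0) := by
      simpa using (by fun_prop : Continuous fun p : H × ℝ => dist p.1 y + 2 * p.2 * ‖w‖).tendsto
        (y, 0)
    rw [nhds_prod_eq] at hcont
    exact ((hcont.mono_left (prod_mono le_rfl nhdsWithin_le_nhds)).eventually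
      (eventually_lt_nhds hδ)).and (tendsto_snd.eventually self_mem_nhdsWithin)
  refine mem_clarkeTangentCone_of_eventually_add_smul_mem ?_
  filter_upwards [hnear] with ⟨z, t⟩ ⟨hzt, ht⟩ hz
  refine add_smul_mem_of_inner_proxNormalCone_le hA (sub_pos.2 (mem_ball.1 hw)) hz ht.le
    fun a ha hat η hη => ?_
  have hay : dist a y < δ := by linarith [dist_triangle a z y]
  have hwv : ⟪η, w - v⟫ ≤ ‖η‖ * dist w v := by
    rw [dist_eq_norm]
    exact real_inner_le_norm _ _
  calc ⟪η, w⟫ = ⟪η, v⟫ + ⟪η, w - v⟫ := by rw [← inner_add_right, add_sub_cancel]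
    _ ≤ -((ε - dist w v) * ‖η‖) := by linarith [hprox a ha hay η hη]

end Tangent

theorem interior_clarkeTangentCone_nonempty_of_pointed_limitingNormalCone_general
    {n : ℕ} (A : Set (EuclideanSpace ℝ (Fin n))) (hA : IsClosed A)
    (y : EuclideanSpace ℝ (Fin n))
    (hpointed : IsPointedCone (convexHull ℝ (limitingNormalCone A y))) :
    (interior (clarkeTangentCone A y)).Nonempty := by
  obtain ⟨v, ε, hε, hv⟩ := exists_inner_le_neg_mul_norm_of_isPointedCone
    (fun c hc η hη => smul_mem_limitingNormalCone hc hη) (isClosed_limitingNormalCone A y)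
    hpointed
  obtain ⟨δ, hδ, hprox⟩ := exists_forall_inner_proxNormalCone_le (half_lt_self hε) hv
  exact ⟨v, interior_maximal (ball_subset_clarkeTangentCone hA hδ hprox) isOpen_ball
    (mem_ball_self (half_pos hε))⟩

/-- If the convex hull of the limiting normal cone `N_A(y)` is pointed, then the Clarke
tangent cone `T_A(y)` has nonempty interior. -/
theorem interior_clarkeTangentCone_nonempty_of_pointed_limitingNormalCone
    {n : ℕ} (A : Set (EuclideanSpace ℝ (Fin n))) (hA : IsClosed A) (hAne : A.Nonempty)
    (y : EuclideanSpace ℝ (Fin n)) (hy : y ∈ frontier A)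
    (hpointed : IsPointedCone (convexHull ℝ (limitingNormalCone A y))) :
    (interior (clarkeTangentCone A y)).Nonempty :=
  interior_clarkeTangentCone_nonempty_of_pointed_limitingNormalCone_general A hA y hpointed
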